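/- If 4 divides b, then ∑_{a : gcd(a,b)=1, 1 ≤ a ≤ b} (-1)^{inv(a,b)} = 0. -/

import Mathlib

/-!
For `a` coprime to `b`, the residues of `a * x` and `(b - a) * x` in `{1, …, b}` are mirror images
`r ↦ b - r` for `x < b`, and both are `b` at `x = b`. Hence every pair `i < j < b` is an inversion
of exactly one of `a`, `b - a`, and no pair ending at `b` is an inversion, so
`inv(a,b) + inv(b-a,b) = (b-1).choose 2`, which is odd when `4 ∣ b`. The reflection `a ↦ b - a`
of the summation range therefore negates the sum.
-/

/-- The sawtooth function ((x)): 0 if x is an integer, else x - ⌊x⌋ - 1/2. -/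
def sawtooth (x : ℚ) : ℚ := if x.den = 1 then 0 else x - ⌊x⌋ - 1/2

/-- The Dedekind sum s(a,b) = ∑_{i=1}^{b-1} (i/b)·((a·i/b)). -/
def dedekindSum (a b : ℕ) : ℚ :=
  ∑ i ∈ Finset.Icc 1 (b - 1), (i : ℚ) / (b : ℚ) * sawtooth ((a * i : ℕ) / (b : ℚ))

/-- Representative of a·x mod b in {1, ..., b}. -/
def modRep (a b x : ℕ) : ℕ := if a * x % b = 0 then b else a * x % b

/-- inv(a,b): number of pairs 1 ≤ i < j ≤ b with a·i mod b > a·j mod b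
(representatives in {1,...,b}). -/
def invNum (a b : ℕ) : ℕ :=
  ((Finset.Icc 1 b ×ˢ Finset.Icc 1 b).filter
    (fun p => p.1 < p.2 ∧ modRep a b p.2 < modRep a b p.1)).card

open Finset

section

variable {a b x y : ℕ}

@[simp] lemma modRep_self_right (a b : ℕ) : modRep a b b = b := by
  simp [modRep]

lemma modRep_le (hb : 0 < b) : modRep a b x ≤ b := by
  unfold modRep
  split_ifs
  · rfl
  · exact (Nat.mod_lt _ hb).le

lemma mul_mod_ne_zero_of_coprime (ha : a.Coprime b) (hx0 : 0 < x) (hxb : x < b) :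
    a * x % b ≠ 0 := fun h ↦
  absurd (Nat.le_of_dvd hx0 (ha.symm.dvd_of_dvd_mul_left (Nat.dvd_of_mod_eq_zero h))) (by omega)

lemma modRep_of_coprime (ha : a.Coprime b) (hx0 : 0 < x) (hxb : x < b) :
    modRep a b x = a * x % b :=
  if_neg (mul_mod_ne_zero_of_coprime ha hx0 hxb)

lemma modRep_inj_of_coprime (ha : a.Coprime b) (hx0 : 0 < x) (hxb : x < b) (hy0 : 0 < y)
    (hyb : y < b) (h : modRep a b x = modRep a b y) : x = y := by
  rw [modRep_of_coprime ha hx0 hxb, modRep_of_coprime ha hy0 hyb] at h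
  have := Nat.ModEq.cancel_left_of_coprime (Nat.coprime_comm.1 ha) h
  rwa [Nat.ModEq, Nat.mod_eq_of_lt hxb, Nat.mod_eq_of_lt hyb] at this

lemma modRep_add_modRep_sub (ha : a.Coprime b) (hab : a ≤ b) (hx0 : 0 < x) (hxb : x < b) :
    modRep a b x + modRep (b - a) b x = b := by
  rw [modRep_of_coprime ha hx0 hxb,
    modRep_of_coprime ((Nat.coprime_self_sub_left hab).2 ha) hx0 hxb]
  have hdvd : b ∣ a * x % b + (b - a) * x % b := by
    rw [Nat.dvd_iff_mod_eq_zero, ← Nat.add_mod, ← Nat.add_mul, Nat.add_sub_cancel' hab,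
      Nat.mul_mod_right]
  have := Nat.mod_lt (a * x) (by omega : 0 < b)
  have := Nat.mod_lt ((b - a) * x) (by omega : 0 < b)
  exact Nat.eq_of_dvd_of_lt_two_mul (by simp [mul_mod_ne_zero_of_coprime ha hx0 hxb]) hdvd
    (by omega)

lemma invNum_add_invNum_sub (ha : a.Coprime b) (hab : a ≤ b) :
    invNum a b + invNum (b - a) b = (b - 1).choose 2 := by
  have hpair : ∀ p ∈ Icc 1 b ×ˢ Icc 1 b,
      ((if p.1 < p.2 ∧ modRep a b p.2 < modRep a b p.1 then 1 else 0) +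
        if p.1 < p.2 ∧ modRep (b - a) b p.2 < modRep (b - a) b p.1 then 1 else 0) =
      if p.1 < p.2 ∧ p.2 < b then 1 else 0 := by
    rintro ⟨i, j⟩ hp
    simp only [mem_product, mem_Icc] at hp
    dsimp only
    by_cases hij : i < j
    swap
    · simp [hij]
    simp only [hij, true_and]
    by_cases hjb : j < b
    · have hib : i < b := by omega
      have hi := modRep_add_modRep_sub ha hab hp.1.1 hib
      have hj := modRep_add_modRep_sub ha hab (by omega : 0 < j) hjb
      have hne : i ≠ j → modRep a b i ≠ modRep a b j :=
        mt (modRep_inj_of_coprime ha hp.1.1 hib (by omega) hjb)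
      split_ifs <;> omega
    · have hi := modRep_le (a := a) (x := i) (by omega : 0 < b)
      have hi' := modRep_le (a := b - a) (x := i) (by omega : 0 < b)
      obtain rfl : j = b := by omega
      simp only [modRep_self_right]
      split_ifs <;> omega
  have hpairs : #{p ∈ Icc 1 b ×ˢ Icc 1 b | p.1 < p.2 ∧ p.2 < b} =
      #{p ∈ Icc 1 (b - 1) ×ˢ Icc 1 (b - 1) | p.1 < p.2} := by
    congr 1
    ext ⟨i, j⟩
    simp only [mem_filter, mem_product, mem_Icc]
    omega
  rw [invNum, invNum, card_filter, card_filter, ← sum_add_distrib, sum_congr rfl hpair,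
    ← card_filter, hpairs, card_product_filter_lt, Nat.card_Icc, Nat.add_sub_cancel]

lemma odd_choose_two_of_four_dvd {n : ℕ} (hn : 4 ∣ n) (hn0 : 0 < n) :
    Odd ((n - 1).choose 2) := by
  obtain ⟨k, rfl⟩ := hn
  obtain ⟨m, rfl⟩ : ∃ m, k = m + 1 := ⟨k - 1, by omega⟩
  rw [Nat.choose_two_right, show 4 * (m + 1) - 1 = 4 * m + 3 by omega,
    show (4 * m + 3) * (4 * m + 3 - 1) = 2 * ((4 * m + 3) * (2 * m + 1)) by
      rw [show 4 * m + 3 - 1 = 2 * (2 * m + 1) by omega]; ring,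
    Nat.mul_div_cancel_left _ two_pos]
  exact Nat.odd_mul.2 ⟨⟨2 * m + 1, by ring⟩, ⟨m, rfl⟩⟩

lemma neg_one_pow_invNum_sub (hb : 4 ∣ b) (hb0 : 0 < b) (ha : a.Coprime b)
    (hab : a ≤ b) : (-1 : ℤ) ^ invNum (b - a) b = -(-1) ^ invNum a b := by
  have h :=
    (invNum_add_invNum_sub ha hab ▸ odd_choose_two_of_four_dvd hb hb0).neg_one_pow (α := ℤ)
  rw [pow_add] at h
  linear_combination (-1 : ℤ) ^ invNum a b * h -
    (-1 : ℤ) ^ invNum (b - a) b * pow_mul_pow_eq_one (invNum a b) (neg_one_mul (-1 : ℤ))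

lemma sub_mem_filter_coprime (hb : b ≠ 1)
    (ha : a ∈ (Icc 1 b).filter (fun a => Nat.Coprime a b)) :
    b - a ∈ (Icc 1 b).filter (fun a => Nat.Coprime a b) := by
  simp only [mem_filter, mem_Icc] at ha ⊢
  obtain ⟨⟨ha1, hab⟩, hcop⟩ := ha
  have hne : a ≠ b := fun h ↦ hb ((Nat.coprime_self b).1 (h ▸ hcop))
  exact ⟨⟨by omega, by omega⟩, (Nat.coprime_self_sub_left hab).2 hcop⟩

end

theorem stmt13 (b : ℕ) (hb : 4 ∣ b) :
    ∑ a ∈ (Finset.Icc 1 b).filter (fun a => Nat.Coprime a b),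
      ((-1 : ℤ)) ^ invNum a b = 0 := by
  set s := (Icc 1 b).filter (fun a => Nat.Coprime a b)
  have hb1 : b ≠ 1 := by rintro rfl; norm_num at hb
  have hle : ∀ a ∈ s, a ≤ b := fun a ha ↦ (mem_Icc.1 (mem_filter.1 ha).1).2
  have hreflect :
      ∑ a ∈ s, (-1 : ℤ) ^ invNum a b = ∑ a ∈ s, (-1 : ℤ) ^ invNum (b - a) b :=
    sum_nbij' (b - ·) (b - ·) (fun _ ↦ sub_mem_filter_coprime hb1)
      (fun _ ↦ sub_mem_filter_coprime hb1) (fun a ha ↦ Nat.sub_sub_self (hle a ha))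
      (fun a ha ↦ Nat.sub_sub_self (hle a ha))
      (fun a ha ↦ by rw [Nat.sub_sub_self (hle a ha)])
  have hneg :
      ∑ a ∈ s, (-1 : ℤ) ^ invNum (b - a) b = -∑ a ∈ s, (-1 : ℤ) ^ invNum a b := by
    rw [← sum_neg_distrib]
    refine sum_congr rfl fun a ha ↦ ?_
    simp only [s, mem_filter, mem_Icc] at ha
    exact neg_one_pow_invNum_sub hb (by omega) ha.2 ha.1.2
  linarith
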